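/- Diagonal neural networks: fix c ∈ ℝⁿ and define f : ℝⁿ × ℝⁿ → ℝ by f(x, y) = ½‖x ∘ y − c‖² = ½ Σ_{i=1}^n (x_i y_i − c_i)², where ∘ is the element-wise product. At every point (x, y), the Hessian of f, as a symmetric operator on ℝ^{2n}, has eigenvalues (counted with multiplicity) exactly the multiset {½[x_i² + y_i² + √((x_i² − y_i²)² + 4(2x_i y_i − c_i)²)] : 1 ≤ i ≤ n} ∪ {½[x_i² + y_i² − √((x_i² − y_i²)² + 4(2x_i y_i − c_i)²)] : 1 ≤ i ≤ n}; in each such pair at least one eigenvalue is nonnegative, and consequently f is non-convex of grade n on ℝ^{2n}. -/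

import Mathlib

/-!
Each summand `½(xᵢyᵢ − cᵢ)²` depends only on the pair `(xᵢ, yᵢ)`, so in the coordinates `(x, y)` the
Hessian consists of four diagonal blocks with entries `yᵢ²`, `2xᵢyᵢ − cᵢ`, `2xᵢyᵢ − cᵢ`, `xᵢ²`.
Grouping the coordinates into the pairs `(xᵢ, yᵢ)` makes it block diagonal with `2 × 2` blocks,
whose eigenvalues are `λᵢ^±` by the quadratic formula. On the `n`-dimensional subspace of
directions with vanishing `y`-part the Hessian form is `∑ᵢ (hₓᵢ yᵢ)² ≥ 0`.
-/

open Polynomial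

namespace Matrix

variable {ι R : Type*} [DecidableEq ι]

theorem fromBlocks_diagonal_eq_reindex_blockDiagonal [Zero R] (a b c d : ι → R) :
    fromBlocks (diagonal a) (diagonal b) (diagonal c) (diagonal d) =
      reindex ((finTwoEquiv.prodCongr (Equiv.refl ι)).trans (Equiv.boolProdEquivSum ι))
        ((finTwoEquiv.prodCongr (Equiv.refl ι)).trans (Equiv.boolProdEquivSum ι))
        (blockDiagonal fun i => !![a i, b i; c i, d i]) := by
  ext (i | i) (j | j) <;> by_cases h : i = j <;>
    simp [blockDiagonal_apply, finTwoEquiv, h]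

variable [Fintype ι] [CommRing R]

theorem det_fromBlocks_diagonal (a b c d : ι → R) :
    (fromBlocks (diagonal a) (diagonal b) (diagonal c) (diagonal d)).det =
      ∏ i, (a i * d i - b i * c i) := by
  rw [fromBlocks_diagonal_eq_reindex_blockDiagonal, det_reindex_self, det_blockDiagonal]
  simp only [det_fin_two_of]

theorem charpoly_fromBlocks_diagonal (a b c d : ι → R) :
    (fromBlocks (diagonal a) (diagonal b) (diagonal c) (diagonal d)).charpoly =
      ∏ i, ((X - C (a i)) * (X - C (d i)) - C (b i * c i)) := by
  rw [charpoly, charmatrix_fromBlocks, charmatrix_diagonal, charmatrix_diagonal,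
    diagonal_map (map_zero _), diagonal_map (map_zero _), diagonal_neg, diagonal_neg,
    det_fromBlocks_diagonal]
  simp only [mul_neg, neg_mul, neg_neg, map_mul]

end Matrix

theorem Polynomial.X_sub_C_mul_X_sub_C_sub_C_eq {R : Type*} [CommRing R] {a d e p q : R}
    (hsum : p + q = a + d) (hprod : p * q = a * d - e) :
    (X - C a) * (X - C d) - C e = (X - C p) * (X - C q) := by
  have he : e = a * d - p * q := by rw [hprod]; ring
  have hd : d = p + q - a := by rw [hsum]; ring
  subst he hd
  simp only [map_sub, map_add, map_mul]
  ring

section HalfSqMulSub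

variable {E : Type*} [NormedAddCommGroup E] [NormedSpace ℝ E] (ℓ₁ ℓ₂ : E →L[ℝ] ℝ) (c : ℝ)

theorem hasFDerivAt_mul_sub (z : E) :
    HasFDerivAt (fun w => ℓ₁ w * ℓ₂ w - c) (ℓ₁ z • ℓ₂ + ℓ₂ z • ℓ₁) z :=
  (ℓ₁.hasFDerivAt.fun_mul ℓ₂.hasFDerivAt).sub_const c

theorem fderiv_half_mul_sq_mul_sub :
    fderiv ℝ (fun w => 1 / 2 * (ℓ₁ w * ℓ₂ w - c) ^ 2) =
      fun z => (ℓ₁ z * ℓ₂ z - c) • (ℓ₁ z • ℓ₂ + ℓ₂ z • ℓ₁) := by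
  funext z
  refine (((hasFDerivAt_mul_sub ℓ₁ ℓ₂ c z).pow 2).const_mul (1 / 2)).fderiv.trans ?_
  ext u
  simp only [one_div, Nat.add_one_sub_one, pow_one, nsmul_eq_mul, Nat.cast_ofNat, smul_add,
    add_apply, smul_apply, smul_eq_mul]
  ring

theorem iteratedFDeriv_two_half_mul_sq_mul_sub_apply (z u v : E) :
    iteratedFDeriv ℝ 2 (fun w => 1 / 2 * (ℓ₁ w * ℓ₂ w - c) ^ 2) z ![u, v] =
      (ℓ₁ u * ℓ₂ z + ℓ₁ z * ℓ₂ u) * (ℓ₁ v * ℓ₂ z + ℓ₁ z * ℓ₂ v) +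
        (ℓ₁ z * ℓ₂ z - c) * (ℓ₁ u * ℓ₂ v + ℓ₁ v * ℓ₂ u) := by
  have hD2 := (hasFDerivAt_mul_sub ℓ₁ ℓ₂ c z).fun_smul
    ((ℓ₁.hasFDerivAt.smul_const ℓ₂).fun_add (ℓ₂.hasFDerivAt.smul_const ℓ₁))
  rw [iteratedFDeriv_two_apply, fderiv_half_mul_sq_mul_sub, hD2.fderiv]
  simp only [smul_add, Matrix.cons_val_zero, Matrix.cons_val_one, Matrix.cons_val_fin_one,
    add_apply, smul_apply, ContinuousLinearMap.smulRight_apply, smul_eq_mul]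
  ring

end HalfSqMulSub

theorem LinearMap.finrank_le_finrank_add_finrank_ker {K V W : Type*} [DivisionRing K]
    [AddCommGroup V] [Module K V] [AddCommGroup W] [Module K W] [FiniteDimensional K V]
    [FiniteDimensional K W] (f : V →ₗ[K] W) :
    Module.finrank K V ≤ Module.finrank K W + Module.finrank K (LinearMap.ker f) := by
  have := f.finrank_range_add_finrank_ker
  have := Submodule.finrank_le (LinearMap.range f)
  omega

theorem EuclideanSpace.exists_card_le_finrank_forall_inr_eq_zero (ι : Type*) [Fintype ι] :
    ∃ V : Submodule ℝ (EuclideanSpace ℝ (ι ⊕ ι)), Fintype.card ι ≤ Module.finrank ℝ V ∧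
      ∀ u ∈ V, ∀ i, u (Sum.inr i) = 0 := by
  let restrictInr : EuclideanSpace ℝ (ι ⊕ ι) →ₗ[ℝ] ι → ℝ :=
    LinearMap.funLeft ℝ ℝ Sum.inr ∘ₗ (WithLp.linearEquiv 2 ℝ (ι ⊕ ι → ℝ)).toLinearMap
  refine ⟨LinearMap.ker restrictInr, ?_, fun u hu i => congr_fun hu i⟩
  have := restrictInr.finrank_le_finrank_add_finrank_ker
  simp only [finrank_euclideanSpace, Fintype.card_sum, Module.finrank_fintype_fun_eq_card] at this
  omega

section DiagonalNet

variable {ι : Type*} [Fintype ι]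

noncomputable def diagonalNetLoss (c : EuclideanSpace ℝ ι) (z : EuclideanSpace ℝ (ι ⊕ ι)) : ℝ :=
  1 / 2 * ∑ i, (z (Sum.inl i) * z (Sum.inr i) - c i) ^ 2

theorem iteratedFDeriv_two_diagonalNetLoss_apply (c : EuclideanSpace ℝ ι)
    (z u v : EuclideanSpace ℝ (ι ⊕ ι)) :
    iteratedFDeriv ℝ 2 (diagonalNetLoss c) z ![u, v] = ∑ i,
      ((u (Sum.inl i) * z (Sum.inr i) + z (Sum.inl i) * u (Sum.inr i)) *
          (v (Sum.inl i) * z (Sum.inr i) + z (Sum.inl i) * v (Sum.inr i)) +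
        (z (Sum.inl i) * z (Sum.inr i) - c i) *
          (u (Sum.inl i) * v (Sum.inr i) + v (Sum.inl i) * u (Sum.inr i))) := by
  have hsum : diagonalNetLoss c = fun w => ∑ i, 1 / 2 *
      (EuclideanSpace.proj (Sum.inl i) w * EuclideanSpace.proj (Sum.inr i) w - c i) ^ 2 := by
    funext w
    exact Finset.mul_sum _ _ _
  rw [hsum, iteratedFDeriv_fun_sum_apply fun i _ => by fun_prop]
  simp only [sum_apply, iteratedFDeriv_two_half_mul_sq_mul_sub_apply]
  rfl

theorem iteratedFDeriv_two_diagonalNetLoss_nonneg_of_inr_eq_zero (c : EuclideanSpace ℝ ι)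
    (z u : EuclideanSpace ℝ (ι ⊕ ι)) (hu : ∀ i, u (Sum.inr i) = 0) :
    0 ≤ iteratedFDeriv ℝ 2 (diagonalNetLoss c) z ![u, u] := by
  rw [iteratedFDeriv_two_diagonalNetLoss_apply]
  simp only [hu, mul_zero, add_zero]
  exact Finset.sum_nonneg fun i _ => mul_self_nonneg _

variable [DecidableEq ι]

theorem hessian_diagonalNetLoss_eq_fromBlocks (c : EuclideanSpace ℝ ι)
    (z : EuclideanSpace ℝ (ι ⊕ ι)) :
    Matrix.of (fun a b => iteratedFDeriv ℝ 2 (diagonalNetLoss c) z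
        ![EuclideanSpace.single a 1, EuclideanSpace.single b 1]) =
      Matrix.fromBlocks (Matrix.diagonal fun i => z (Sum.inr i) ^ 2)
        (Matrix.diagonal fun i => 2 * z (Sum.inl i) * z (Sum.inr i) - c i)
        (Matrix.diagonal fun i => 2 * z (Sum.inl i) * z (Sum.inr i) - c i)
        (Matrix.diagonal fun i => z (Sum.inl i) ^ 2) := by
  ext (i | i) (j | j) <;>
    simp only [Matrix.of_apply, Matrix.fromBlocks_apply₁₁, Matrix.fromBlocks_apply₁₂,
      Matrix.fromBlocks_apply₂₁, Matrix.fromBlocks_apply₂₂, Matrix.diagonal_apply,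
      iteratedFDeriv_two_diagonalNetLoss_apply, PiLp.single_apply, Sum.inl.injEq, Sum.inr.injEq,
      reduceCtorEq, ↓reduceIte, eq_comm, ite_mul, mul_ite, one_mul, zero_mul, mul_one, mul_zero,
      add_zero, zero_add, ite_self, Finset.sum_add_distrib, Finset.sum_ite_eq, Finset.mem_univ,
      Finset.sum_const_zero] <;>
    (split_ifs with h <;> [(subst h; ring); ring])

end DiagonalNet

theorem diagonal_nn_hessian_spectrum {n : ℕ} (c : EuclideanSpace ℝ (Fin n))
    (f : EuclideanSpace ℝ (Fin n ⊕ Fin n) → ℝ)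
    (hf : ∀ z, f z = (1 / 2) * ∑ i : Fin n,
      (z (Sum.inl i) * z (Sum.inr i) - c i) ^ 2)
    (z : EuclideanSpace ℝ (Fin n ⊕ Fin n))
    (lamP lamM : Fin n → ℝ)
    (hlamP : ∀ i, lamP i = (1 / 2) * (z (Sum.inl i) ^ 2 + z (Sum.inr i) ^ 2 +
      Real.sqrt ((z (Sum.inl i) ^ 2 - z (Sum.inr i) ^ 2) ^ 2 +
        4 * (2 * z (Sum.inl i) * z (Sum.inr i) - c i) ^ 2)))
    (hlamM : ∀ i, lamM i = (1 / 2) * (z (Sum.inl i) ^ 2 + z (Sum.inr i) ^ 2 -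
      Real.sqrt ((z (Sum.inl i) ^ 2 - z (Sum.inr i) ^ 2) ^ 2 +
        4 * (2 * z (Sum.inl i) * z (Sum.inr i) - c i) ^ 2))) :
    (Matrix.of (fun a b : Fin n ⊕ Fin n =>
        iteratedFDeriv ℝ 2 f z ![EuclideanSpace.single a (1 : ℝ),
          EuclideanSpace.single b (1 : ℝ)])).charpoly =
      ∏ i : Fin n, ((X - C (lamP i)) * (X - C (lamM i))) ∧
    (∀ i, 0 ≤ lamP i) ∧
    ∃ V : Submodule ℝ (EuclideanSpace ℝ (Fin n ⊕ Fin n)),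
      n ≤ Module.finrank ℝ V ∧ ∀ h ∈ V, 0 ≤ iteratedFDeriv ℝ 2 f z ![h, h] := by
  obtain rfl : f = diagonalNetLoss c := funext hf
  refine ⟨?_, fun i => by rw [hlamP]; positivity, ?_⟩
  · rw [hessian_diagonalNetLoss_eq_fromBlocks, Matrix.charpoly_fromBlocks_diagonal]
    refine Finset.prod_congr rfl fun i _ => X_sub_C_mul_X_sub_C_sub_C_eq ?_ ?_
    · rw [hlamP, hlamM]
      ring
    · have hsqrt := Real.sq_sqrt (show 0 ≤ (z (Sum.inl i) ^ 2 - z (Sum.inr i) ^ 2) ^ 2 +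
          4 * (2 * z (Sum.inl i) * z (Sum.inr i) - c i) ^ 2 by positivity)
      rw [hlamP, hlamM]
      linear_combination (-1 / 4 : ℝ) * hsqrt
  · obtain ⟨V, hdim, hV⟩ := EuclideanSpace.exists_card_le_finrank_forall_inr_eq_zero (Fin n)
    exact ⟨V, by simpa using hdim, fun h hh =>
      iteratedFDeriv_two_diagonalNetLoss_nonneg_of_inr_eq_zero c z h (hV h hh)⟩
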